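/- For any base class 𝒫^base, any perturbation kernel T, and any δ > 0, the extrapolation uncertainty of the perturbed class satisfies U_{𝒫^perturb}(δ) ≤ U_{𝒫^base}(ρ_T(δ)) + ℰ_{T,𝒫^base,δ}, where ρ_T(δ) := sup over X' ∈ 𝒳* with d(X',𝒳) ≤ δ of max over X̃ ∈ 𝒳* with T(X̃|X') > 0 of d(X̃,𝒳), and ℰ_{T,𝒫^base,δ} is the perturbation cost defined in the context. -/
import Mathlib


open Finset

/-- Total variation distance between two real-valued functions on a finite set. -/
noncomputable def tvDist {V : Type*} [Fintype V] (p q : V → ℝ) : ℝ :=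
  (1 / 2) * ∑ i, |p i - q i|

/-- Distance from a prefix to the (nonempty, finite) training support. -/
noncomputable def distToSupp {Xs : Type*} (M : Xs → Xs → ℝ)
    (supp : Finset Xs) (h : supp.Nonempty) (X : Xs) : ℝ :=
  supp.inf' h fun X₀ => M X X₀

/-- The perturbed model: first perturb the prefix via the kernel `T`, then apply `P`. -/
noncomputable def perturbedModel {Θ Xs V : Type*} [Fintype Xs]
    (T : Xs → Xs → ℝ) (P : Θ → Xs → V → ℝ) (θ : Θ) (X : Xs) (i : V) : ℝ :=
  ∑ Xt, T X Xt * P θ Xt i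

/-- Extrapolation uncertainty of the model class `{P θ : θ ∈ Θ}` at level `δ`. -/
noncomputable def extrapUncertainty {Θ Xs V : Type*} [Fintype V]
    (M : Xs → Xs → ℝ) (supp : Finset Xs) (h : supp.Nonempty)
    (P : Θ → Xs → V → ℝ) (δ : ℝ) : ℝ :=
  sSup { r | ∃ X' θ θ',
    distToSupp M supp h X' ≤ δ ∧
    (∀ X ∈ supp, tvDist (P θ X) (P θ' X) = 0) ∧
    r = tvDist (P θ X') (P θ' X') }

/-- The perturbation cost `ℰ_{T,𝒫^base,δ}`. -/
noncomputable def perturbCost {Θ Xs V : Type*} [Fintype Xs] [Fintype V]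
    (M : Xs → Xs → ℝ) (supp : Finset Xs) (h : supp.Nonempty)
    (T : Xs → Xs → ℝ) (P : Θ → Xs → V → ℝ) (δ : ℝ) : ℝ :=
  sSup { r | ∃ X' Xstar θ θ',
    distToSupp M supp h X' ≤ δ ∧ 0 < T X' Xstar ∧
    (∀ X ∈ supp, tvDist (perturbedModel T P θ X) (perturbedModel T P θ' X) = 0) ∧
    r = sInf { s | ∃ θ₀ θ₀',
      (∀ X ∈ supp, tvDist (P θ₀ X) (P θ₀' X) = 0) ∧
      s = tvDist (fun i => P θ Xstar i - P θ₀ Xstar i)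
                 (fun i => P θ' Xstar i - P θ₀' Xstar i) } }

/-- `ρ_T(δ)`: sup over `X'` within distance `δ` of the support of the max over `Xt` reachable
by the perturbation (`T(Xt|X') > 0`) of the distance `d(Xt, 𝒳)`. -/
noncomputable def rhoT {Xs : Type*}
    (M : Xs → Xs → ℝ) (supp : Finset Xs) (h : supp.Nonempty)
    (T : Xs → Xs → ℝ) (δ : ℝ) : ℝ :=
  sSup { r | ∃ X' Xt : Xs,
    distToSupp M supp h X' ≤ δ ∧ 0 < T X' Xt ∧ r = distToSupp M supp h Xt }

lemma tvDist_nonneg' {V : Type*} [Fintype V] (p q : V → ℝ) : 0 ≤ tvDist p q := by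
  unfold tvDist
  positivity

lemma tvDist_self' {V : Type*} [Fintype V] (p : V → ℝ) : tvDist p p = 0 := by
  simp [tvDist]

lemma tvDist_tri' {V : Type*} [Fintype V] (p q r s : V → ℝ) :
    tvDist p q ≤ tvDist (fun i => p i - r i) (fun i => q i - s i) + tvDist r s := by
  unfold tvDist
  rw [← mul_add, ← Finset.sum_add_distrib]
  apply mul_le_mul_of_nonneg_left _ (by norm_num)
  apply Finset.sum_le_sum
  intro i _
  have h : p i - q i = ((p i - r i) - (q i - s i)) + (r i - s i) := by ring
  rw [h]
  exact abs_add_le _ _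

lemma tvDist_le_one' {V : Type*} [Fintype V] (p q : V → ℝ)
    (hp : (∀ i, 0 ≤ p i) ∧ ∑ i, p i = 1) (hq : (∀ i, 0 ≤ q i) ∧ ∑ i, q i = 1) :
    tvDist p q ≤ 1 := by
  unfold tvDist
  have : ∑ i, |p i - q i| ≤ ∑ i, (p i + q i) := by
    apply Finset.sum_le_sum
    intro i _
    calc |p i - q i| ≤ |p i| + |q i| := abs_sub _ _
      _ = p i + q i := by rw [abs_of_nonneg (hp.1 i), abs_of_nonneg (hq.1 i)]
  rw [Finset.sum_add_distrib, hp.2, hq.2] at this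
  linarith

lemma tvDist_diff_le_two' {V : Type*} [Fintype V] (p q r s : V → ℝ)
    (hp : (∀ i, 0 ≤ p i) ∧ ∑ i, p i = 1) (hq : (∀ i, 0 ≤ q i) ∧ ∑ i, q i = 1)
    (hr : (∀ i, 0 ≤ r i) ∧ ∑ i, r i = 1) (hs : (∀ i, 0 ≤ s i) ∧ ∑ i, s i = 1) :
    tvDist (fun i => p i - r i) (fun i => q i - s i) ≤ 2 := by
  have h1 : tvDist (fun i => p i - r i) (fun i => q i - s i) ≤ tvDist p q + tvDist r s := by
    unfold tvDist
    rw [← mul_add, ← Finset.sum_add_distrib]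
    apply mul_le_mul_of_nonneg_left _ (by norm_num)
    apply Finset.sum_le_sum
    intro i _
    have h : (p i - r i) - (q i - s i) = (p i - q i) + -(r i - s i) := by ring
    rw [h]
    exact (abs_add_le _ _).trans (by rw [abs_neg])
  have h2 := tvDist_le_one' p q hp hq
  have h3 := tvDist_le_one' r s hr hs
  linarith

lemma pert_tv_le' {Θ Xs V : Type*} [Fintype Xs] [Fintype V]
    (T : Xs → Xs → ℝ) (hT : ∀ X Y, 0 ≤ T X Y) (P : Θ → Xs → V → ℝ)
    (θ θ' : Θ) (X' : Xs) :
    tvDist (perturbedModel T P θ X') (perturbedModel T P θ' X') ≤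
      ∑ Xt, T X' Xt * tvDist (P θ Xt) (P θ' Xt) := by
  unfold tvDist perturbedModel
  calc (1/2) * ∑ i, |(∑ Xt, T X' Xt * P θ Xt i) - ∑ Xt, T X' Xt * P θ' Xt i|
      ≤ (1/2) * ∑ i, ∑ Xt, T X' Xt * |P θ Xt i - P θ' Xt i| := by
        apply mul_le_mul_of_nonneg_left _ (by norm_num)
        apply Finset.sum_le_sum
        intro i _
        rw [← Finset.sum_sub_distrib]
        refine (Finset.abs_sum_le_sum_abs _ _).trans ?_
        apply Finset.sum_le_sum
        intro Xt _
        rw [← mul_sub, abs_mul, abs_of_nonneg (hT _ _)]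
    _ = ∑ Xt, T X' Xt * ((1/2) * ∑ i, |P θ Xt i - P θ' Xt i|) := by
        rw [Finset.sum_comm, Finset.mul_sum]
        apply Finset.sum_congr rfl
        intro Xt _
        rw [Finset.mul_sum, Finset.mul_sum, Finset.mul_sum]
        apply Finset.sum_congr rfl
        intro i _
        ring

/-- For any base class, any perturbation kernel and any `δ > 0`, the
extrapolation uncertainty of the perturbed class is bounded by the extrapolation uncertainty of
the base class at level `ρ_T(δ)` plus the perturbation cost `ℰ_{T,𝒫^base,δ}`. -/
theorem extrapUncertainty_perturbed_le_base_add_cost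
    {Θ Xs V : Type*} [Fintype Xs] [Nonempty Xs] [Fintype V] [Nonempty V]
    (M : Xs → Xs → ℝ) (supp : Finset Xs) (hsupp : supp.Nonempty)
    (T : Xs → Xs → ℝ) (hT : ∀ X, (∀ Y, 0 ≤ T X Y) ∧ ∑ Y, T X Y = 1)
    (P : Θ → Xs → V → ℝ) (hP : ∀ θ X, (∀ i, 0 ≤ P θ X i) ∧ ∑ i, P θ X i = 1)
    (δ : ℝ) (hδ : 0 < δ) :
    extrapUncertainty M supp hsupp (perturbedModel T P) δ ≤
      extrapUncertainty M supp hsupp P (rhoT M supp hsupp T δ) +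
        perturbCost M supp hsupp T P δ := by
  set ρ := rhoT M supp hsupp T δ with hρdef
  set U := extrapUncertainty M supp hsupp P ρ with hUdef
  set C := perturbCost M supp hsupp T P δ with hCdef
  have hU0 : 0 ≤ U := by
    apply Real.sSup_nonneg
    rintro r ⟨X', θ, θ', -, -, rfl⟩
    exact tvDist_nonneg' _ _
  have hC0 : 0 ≤ C := by
    apply Real.sSup_nonneg
    rintro r ⟨X', Xst, θ, θ', -, -, -, rfl⟩
    apply Real.sInf_nonneg
    rintro s ⟨θ₀, θ₀', -, rfl⟩
    exact tvDist_nonneg' _ _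
  apply Real.sSup_le _ (by linarith)
  rintro r ⟨X', θ, θ', hd, hag, rfl⟩
  have key : ∀ Xt, 0 < T X' Xt → tvDist (P θ Xt) (P θ' Xt) ≤ U + C := by
    intro Xt hpos
    have hρ : distToSupp M supp hsupp Xt ≤ ρ := by
      apply le_csSup
      · refine ⟨Finset.univ.sup' Finset.univ_nonempty (distToSupp M supp hsupp), ?_⟩
        rintro r ⟨a, b, -, -, rfl⟩
        exact Finset.le_sup' _ (Finset.mem_univ b)
      · exact ⟨X', Xt, hd, hpos, rfl⟩
    set S := { s | ∃ θ₀ θ₀',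
      (∀ X ∈ supp, tvDist (P θ₀ X) (P θ₀' X) = 0) ∧
      s = tvDist (fun i => P θ Xt i - P θ₀ Xt i)
                 (fun i => P θ' Xt i - P θ₀' Xt i) } with hSdef
    have hSne : S.Nonempty := ⟨_, θ, θ, fun X _ => tvDist_self' _, rfl⟩
    have hInfC : sInf S ≤ C := by
      apply le_csSup
      · refine ⟨2, ?_⟩
        rintro r ⟨X'', Xst, θ₁, θ₁', -, -, -, rfl⟩
        refine csInf_le_of_le ⟨0, ?_⟩ ⟨θ₁, θ₁, fun X _ => tvDist_self' _, rfl⟩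
          (tvDist_diff_le_two' _ _ _ _ (hP _ _) (hP _ _) (hP _ _) (hP _ _))
        rintro s ⟨θ₀, θ₀', -, rfl⟩
        exact tvDist_nonneg' _ _
      · exact ⟨X', Xt, θ, θ', hd, hpos, hag, rfl⟩
    have htv : tvDist (P θ Xt) (P θ' Xt) - U ≤ sInf S := by
      apply le_csInf hSne
      rintro s ⟨θ₀, θ₀', hag0, rfl⟩
      have hUmem : tvDist (P θ₀ Xt) (P θ₀' Xt) ≤ U := by
        apply le_csSup
        · refine ⟨1, ?_⟩
          rintro r ⟨X'', θ₁, θ₁', -, -, rfl⟩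
          exact tvDist_le_one' _ _ (hP _ _) (hP _ _)
        · exact ⟨Xt, θ₀, θ₀', hρ, hag0, rfl⟩
      have htri := tvDist_tri' (P θ Xt) (P θ' Xt) (P θ₀ Xt) (P θ₀' Xt)
      linarith
    linarith
  calc tvDist (perturbedModel T P θ X') (perturbedModel T P θ' X')
      ≤ ∑ Xt, T X' Xt * tvDist (P θ Xt) (P θ' Xt) :=
        pert_tv_le' T (fun X Y => (hT X).1 Y) P θ θ' X'
    _ ≤ ∑ Xt, T X' Xt * (U + C) := by
        apply Finset.sum_le_sum
        intro Xt _
        rcases eq_or_lt_of_le ((hT X').1 Xt) with h | h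
        · rw [← h]; simp
        · exact mul_le_mul_of_nonneg_left (key Xt h) h.le
    _ = U + C := by rw [← Finset.sum_mul, (hT X').2, one_mul]
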